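/- Let S ⊆ V be a seed set and let θ* be any distribution attaining the minimum of E_θ[R(c̃, S)] over θ ∈ Θ. Then for every node i ∈ V \ S, the probability under θ* that i is influenced equals π*_i exactly: θ*({c : i is reachable from S along edges of c}) = π*_i. -/

import Mathlib

open scoped BigOperators

namespace CorrIM

variable {V : Type*} [Fintype V] [DecidableEq V]

/-- A node `i` is influenced: `i ∈ S`, or `i` is reachable from some node of `S`
along the live edges of the scenario `c`. -/
def influenced (c : Finset (V × V)) (S : Finset V) (i : V) : Prop :=
  ∃ s ∈ S, Relation.ReflTransGen (fun a b : V => (a, b) ∈ c) s i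

/-- `R c S` : the number of influenced nodes in scenario `c` with seed set `S`. -/
noncomputable def R (c : Finset (V × V)) (S : Finset V) : ℕ :=
  Set.ncard {i : V | influenced c S i}

/-- The Fréchet class `Θ` : probability distributions on scenarios (subsets of `E`)
whose marginals agree with the edge likelihoods `p`. -/
def memTheta (E : Finset (V × V)) (p : V × V → ℝ) (θ : Finset (V × V) → ℝ) : Prop :=
  (∀ c, 0 ≤ θ c) ∧ (∀ c, θ c ≠ 0 → c ⊆ E) ∧ (∑ c : Finset (V × V), θ c) = 1 ∧
    ∀ e ∈ E, (∑ c : Finset (V × V), if e ∈ c then θ c else 0) = p e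

/-- Expected number of influenced nodes under the distribution `θ`. -/
noncomputable def expInf (θ : Finset (V × V) → ℝ) (S : Finset V) : ℝ :=
  ∑ c : Finset (V × V), θ c * (R c S : ℝ)

/-- The correlation robust influence function `f^corr`. -/
noncomputable def fcorr (E : Finset (V × V)) (p : V × V → ℝ) (S : Finset V) : ℝ :=
  sInf {x : ℝ | ∃ θ, memTheta E p θ ∧ x = expInf θ S}

open Classical in
/-- Probability of the event `A` under the distribution `θ`. -/
noncomputable def prob (θ : Finset (V × V) → ℝ) (A : Finset (V × V) → Prop) : ℝ :=
  ∑ c : Finset (V × V), if A c then θ c else 0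

/-- `γ` (a list of nodes `i₀, i₁, …, i_λ`, `λ ≥ 1`) is a directed path from the
seed set `S` to the node `i` using edges of `E`. -/
def IsPathFrom (E : Finset (V × V)) (S : Finset V) (i : V) (γ : List V) : Prop :=
  2 ≤ γ.length ∧ (∃ s ∈ S, γ.head? = some s) ∧ γ.getLast? = some i ∧
    γ.Chain' (fun a b : V => (a, b) ∈ E)

/-- The list of edges `(i₀,i₁), …, (i_{λ-1}, i_λ)` of a path `γ = [i₀, …, i_λ]`. -/
def pathEdges (γ : List V) : List (V × V) := γ.zip γ.tail

/-- The weight `L(γ) = 1 - ∑_{l=1}^{λ} (1 - p(i_{l-1}, i_l))` of a path. -/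
noncomputable def L (p : V × V → ℝ) (γ : List V) : ℝ :=
  1 - ((pathEdges γ).map (fun e => 1 - p e)).sum

/-- `π*_i = max(0, max_{γ ∈ Γ(S,i)} L(γ))`, with value `0` when `Γ(S,i) = ∅`. -/
noncomputable def piStar (E : Finset (V × V)) (p : V × V → ℝ) (S : Finset V) (i : V) : ℝ :=
  sSup (insert 0 {x : ℝ | ∃ γ : List V, IsPathFrom E S i γ ∧ x = L p γ})

/-- The independent cascade distribution `θ_ic` : each edge of `E` is live
independently with probability `p e`. -/
noncomputable def thetaIC (E : Finset (V × V)) (p : V × V → ℝ) (c : Finset (V × V)) : ℝ :=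
  if c ⊆ E then (∏ e ∈ c, p e) * ∏ e ∈ E \ c, (1 - p e) else 0

/-- The independent cascade influence function `f^ic`. -/
noncomputable def fic (E : Finset (V × V)) (p : V × V → ℝ) (S : Finset V) : ℝ :=
  expInf (thetaIC E p) S

/-!
For every `θ ∈ Θ` and every path `γ` from `S` to `i`, a union bound over the edges of `γ`
shows that all of them are live with probability at least `L(γ)`, so `i` is influenced with
probability at least `π*_i`.

Conversely, `d_i := 1 - π*_i` (and `d_i := 0` on `S`) satisfies `d_b ≤ d_a + (1 - p(a, b))`
along every edge. Draw `u` uniformly from `(0, 1]` and let `(a, b)` be dead exactly when `u`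
lies on the arc `(d_a, d_a + 1 - p(a, b)]` of `ℝ/ℤ`. Every edge is live with probability
`p(a, b)`, and `d` stays below `u` along live edges from `S`, so `i` is influenced only when
`d_i < u`, which has probability `π*_i`.

The expected influence is the sum over nodes of the probability of being influenced. For a
minimizer these probabilities are termwise at least `1 - d_i`, while their sum is at most that
of the coupling, hence at most `∑ (1 - d_i)`: every term is an equality.
-/

open Finset MeasureTheory

section Probability

omit [DecidableEq V]

variable {θ : Finset (V × V) → ℝ}

lemma prob_eq_sum_ite (θ : Finset (V × V) → ℝ) (A : Finset (V × V) → Prop) [DecidablePred A] :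
    prob θ A = ∑ c, if A c then θ c else 0 := by
  simp only [prob]
  congr!

lemma prob_nonneg (h0 : ∀ c, 0 ≤ θ c) (A : Finset (V × V) → Prop) : 0 ≤ prob θ A :=
  sum_nonneg fun c _ => by split_ifs <;> simp [h0 c]

lemma prob_le_one (h0 : ∀ c, 0 ≤ θ c) (h1 : ∑ c, θ c = 1) (A : Finset (V × V) → Prop) :
    prob θ A ≤ 1 :=
  h1 ▸ sum_le_sum fun c _ => by split_ifs <;> simp [h0 c]

lemma prob_mono (h0 : ∀ c, 0 ≤ θ c) {A B : Finset (V × V) → Prop} (h : ∀ c, A c → B c) :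
    prob θ A ≤ prob θ B :=
  sum_le_sum fun c _ => by split_ifs <;> simp_all

lemma prob_eq_one (h1 : ∑ c, θ c = 1) {A : Finset (V × V) → Prop} (h : ∀ c, A c) :
    prob θ A = 1 :=
  h1 ▸ sum_congr rfl fun c _ => if_pos (h c)

lemma prob_add_prob_le_prob_and_add_one (h0 : ∀ c, 0 ≤ θ c) (h1 : ∑ c, θ c = 1)
    (A B : Finset (V × V) → Prop) :
    prob θ A + prob θ B ≤ prob θ (fun c => A c ∧ B c) + 1 := by
  rw [← h1, prob, prob, prob, ← sum_add_distrib, ← sum_add_distrib]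
  exact sum_le_sum fun c _ => by split_ifs <;> simp_all [h0 c]

lemma one_sub_sum_le_prob_forall {ι : Type*} (h0 : ∀ c, 0 ≤ θ c) (h1 : ∑ c, θ c = 1)
    (A : ι → Finset (V × V) → Prop) (l : List ι) :
    1 - (l.map fun j => 1 - prob θ (A j)).sum ≤ prob θ (fun c => ∀ j ∈ l, A j c) := by
  induction l with
  | nil => simp [prob_eq_one h1]
  | cons j l ih =>
    have := prob_add_prob_le_prob_and_add_one h0 h1 (A j) (fun c => ∀ k ∈ l, A k c)
    simp only [List.map_cons, List.sum_cons, List.forall_mem_cons]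
    linarith

lemma expInf_eq_sum_prob (θ : Finset (V × V) → ℝ) (S : Finset V) :
    expInf θ S = ∑ i, prob θ (fun c => influenced c S i) := by
  classical
  simp only [expInf, prob, R, Set.ncard_eq_toFinset_card', Set.toFinset_ofPred, card_filter,
    Nat.cast_sum, mul_sum]
  rw [sum_comm]
  refine sum_congr rfl fun i _ => sum_congr rfl fun c _ => ?_
  split_ifs <;> simp

variable {Ω : Type*} [MeasurableSpace Ω] {μ : Measure Ω} {X : Ω → Finset (V × V)}

variable (μ X) in
noncomputable def law (c : Finset (V × V)) : ℝ := μ.real (X ⁻¹' {c})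

lemma measurableSet_preimage_singleton_of_forall_mem {α : Type*} [Countable α]
    {Y : Ω → Finset α} (hY : ∀ a, MeasurableSet {ω | a ∈ Y ω}) (c : Finset α) :
    MeasurableSet (Y ⁻¹' {c}) := by
  have : Y ⁻¹' {c} = ⋂ a, {ω | a ∈ Y ω ↔ a ∈ c} := by
    ext ω
    simp [Finset.ext_iff]
  rw [this]
  refine MeasurableSet.iInter fun a => ?_
  by_cases ha : a ∈ c
  · simpa [ha] using hY a
  · convert (hY a).compl using 1
    ext ω
    simp [ha]

lemma prob_law [IsFiniteMeasure μ] (hX : ∀ c, MeasurableSet (X ⁻¹' {c}))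
    (A : Finset (V × V) → Prop) : prob (law μ X) A = μ.real {ω | A (X ω)} := by
  classical
  unfold law
  rw [prob_eq_sum_ite, ← sum_filter, sum_measureReal_preimage_singleton _ fun c _ => hX c]
  congr 1
  ext ω
  simp

end Probability

section Theta

variable {E : Finset (V × V)} {p : V × V → ℝ} {θ : Finset (V × V) → ℝ}

lemma memTheta_law {Ω : Type*} [MeasurableSpace Ω] {μ : Measure Ω} [IsProbabilityMeasure μ]
    {X : Ω → Finset (V × V)} (hX : ∀ c, MeasurableSet (X ⁻¹' {c})) (hXE : ∀ ω, X ω ⊆ E)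
    (hp : ∀ e ∈ E, μ.real {ω | e ∈ X ω} = p e) : memTheta E p (law μ X) := by
  refine ⟨fun c => measureReal_nonneg, fun c hc => ?_, ?_, fun e he => ?_⟩
  · obtain ⟨ω, rfl⟩ : ∃ ω, X ω = c := by
      by_contra! h
      exact hc (by simp [law, Set.preimage_singleton_eq_empty.2 (by simpa using h)])
    exact hXE ω
  · simpa [prob_law hX] using (prob_eq_sum_ite (law μ X) fun _ => True).symm
  · rw [← prob_eq_sum_ite, prob_law hX, hp e he]

lemma memTheta.prob_mem_eq (hθ : memTheta E p θ) {e : V × V} (he : e ∈ E) :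
    prob θ (fun c => e ∈ c) = p e := by
  rw [prob_eq_sum_ite, hθ.2.2.2 e he]

lemma memTheta.nonneg_and_le_one (hθ : memTheta E p θ) : ∀ e ∈ E, 0 ≤ p e ∧ p e ≤ 1 :=
  fun _ he => hθ.prob_mem_eq he ▸ ⟨prob_nonneg hθ.1 _, prob_le_one hθ.1 hθ.2.2.1 _⟩

end Theta

section Paths

omit [Fintype V] [DecidableEq V]

variable {E : Finset (V × V)} {p : V × V → ℝ} {S : Finset V}

lemma isChain_iff_forall_mem_pathEdges {α : Type*} {r : α → α → Prop} {γ : List α} :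
    γ.IsChain r ↔ ∀ e ∈ pathEdges γ, r e.1 e.2 := by
  induction γ using List.twoStepInduction <;> simp_all [pathEdges]

lemma pathEdges_concat {α : Type*} {γ : List α} {a : α} (h : γ.getLast? = some a) (b : α) :
    pathEdges (γ ++ [b]) = pathEdges γ ++ [(a, b)] := by
  induction γ using List.twoStepInduction <;> simp_all [pathEdges]

lemma IsPathFrom.mem_of_mem_pathEdges {i : V} {γ : List V} (hγ : IsPathFrom E S i γ)
    {e : V × V} (he : e ∈ pathEdges γ) : e ∈ E :=
  isChain_iff_forall_mem_pathEdges.1 hγ.2.2.2 e he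

lemma IsPathFrom.concat {a b : V} {γ : List V} (hγ : IsPathFrom E S a γ) (hab : (a, b) ∈ E) :
    IsPathFrom E S b (γ ++ [b]) := by
  obtain ⟨hlen, ⟨s, hs, hhead⟩, hlast, hchain⟩ := hγ
  have hne : γ ≠ [] := by rintro rfl; simp at hlen
  refine ⟨by simp; omega, ⟨s, hs, by rwa [List.head?_append_of_ne_nil _ hne]⟩, by simp,
    isChain_iff_forall_mem_pathEdges.2 ?_⟩
  rw [pathEdges_concat hlast]
  simpa [or_imp, forall_and, hab] using isChain_iff_forall_mem_pathEdges.1 hchain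

lemma L_concat {a : V} {γ : List V} (h : γ.getLast? = some a) (b : V) :
    L p (γ ++ [b]) = L p γ - (1 - p (a, b)) := by
  simp [L, pathEdges_concat h]
  ring

lemma influenced_of_isPathFrom {c : Finset (V × V)} {i : V} {γ : List V}
    (hγ : IsPathFrom E S i γ) (h : ∀ e ∈ pathEdges γ, e ∈ c) : influenced c S i := by
  obtain ⟨hlen, ⟨s, hs, hhead⟩, hlast, -⟩ := hγ
  have hne : γ ≠ [] := by rintro rfl; simp at hlen
  refine ⟨s, hs, ?_⟩
  convert List.relationReflTransGen_of_exists_isChain γ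
    (isChain_iff_forall_mem_pathEdges (r := fun a b => (a, b) ∈ c) |>.2 h) hne
  · simpa [List.head?_eq_some_head hne] using hhead.symm
  · simpa [List.getLast?_eq_some_getLast hne] using hlast.symm

lemma L_le_one (hp : ∀ e ∈ E, 0 ≤ p e ∧ p e ≤ 1) {i : V} {γ : List V}
    (hγ : IsPathFrom E S i γ) : L p γ ≤ 1 := by
  have : 0 ≤ ((pathEdges γ).map fun e => 1 - p e).sum :=
    List.sum_nonneg fun x hx => by
      obtain ⟨e, he, rfl⟩ := List.mem_map.1 hx
      linarith [hp e (hγ.mem_of_mem_pathEdges he)]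
  rw [L]
  linarith

lemma bddAbove_piStar_set (hp : ∀ e ∈ E, 0 ≤ p e ∧ p e ≤ 1) (i : V) :
    BddAbove (insert 0 {x : ℝ | ∃ γ : List V, IsPathFrom E S i γ ∧ x = L p γ}) := by
  refine ⟨1, ?_⟩
  rintro x (rfl | ⟨γ, hγ, rfl⟩)
  exacts [zero_le_one, L_le_one hp hγ]

lemma piStar_nonneg (hp : ∀ e ∈ E, 0 ≤ p e ∧ p e ≤ 1) (i : V) : 0 ≤ piStar E p S i :=
  le_csSup (bddAbove_piStar_set hp i) (Set.mem_insert 0 _)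

lemma L_le_piStar (hp : ∀ e ∈ E, 0 ≤ p e ∧ p e ≤ 1) {i : V} {γ : List V}
    (hγ : IsPathFrom E S i γ) : L p γ ≤ piStar E p S i :=
  le_csSup (bddAbove_piStar_set hp i) (Set.mem_insert_of_mem _ ⟨γ, hγ, rfl⟩)

lemma piStar_le {i : V} {x : ℝ} (hx : 0 ≤ x) (h : ∀ γ, IsPathFrom E S i γ → L p γ ≤ x) :
    piStar E p S i ≤ x :=
  csSup_le (Set.insert_nonempty _ _) <| by
    rintro y (rfl | ⟨γ, hγ, rfl⟩)
    exacts [hx, h γ hγ]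

lemma piStar_le_one (hp : ∀ e ∈ E, 0 ≤ p e ∧ p e ≤ 1) (i : V) : piStar E p S i ≤ 1 :=
  piStar_le zero_le_one fun _ => L_le_one hp

lemma piStar_le_piStar_add (hp : ∀ e ∈ E, 0 ≤ p e ∧ p e ≤ 1) {a b : V} (hab : (a, b) ∈ E) :
    piStar E p S a ≤ piStar E p S b + (1 - p (a, b)) :=
  piStar_le (by linarith [piStar_nonneg (S := S) hp b, hp _ hab]) fun γ hγ => by
    linarith [L_le_piStar hp (hγ.concat hab), L_concat (p := p) hγ.2.2.1 b]

lemma le_piStar_of_mem (hp : ∀ e ∈ E, 0 ≤ p e ∧ p e ≤ 1) {a b : V} (ha : a ∈ S)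
    (hab : (a, b) ∈ E) : p (a, b) ≤ piStar E p S b := by
  have hγ : IsPathFrom E S b [a, b] := ⟨le_rfl, ⟨a, ha, rfl⟩, rfl, List.isChain_pair.2 hab⟩
  simpa [L, pathEdges] using L_le_piStar hp hγ

end Paths

section TruncDist

omit [Fintype V]

variable {E : Finset (V × V)} {p : V × V → ℝ} {S : Finset V}

/-- The distance from `S` for the edge lengths `1 - p e`, truncated at `1`. -/
noncomputable def truncDist (E : Finset (V × V)) (p : V × V → ℝ) (S : Finset V) (i : V) : ℝ :=
  if i ∈ S then 0 else 1 - piStar E p S i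

lemma truncDist_of_mem {i : V} (hi : i ∈ S) : truncDist E p S i = 0 := if_pos hi

lemma truncDist_of_notMem {i : V} (hi : i ∉ S) : truncDist E p S i = 1 - piStar E p S i :=
  if_neg hi

lemma truncDist_mem_Icc (hp : ∀ e ∈ E, 0 ≤ p e ∧ p e ≤ 1) (i : V) :
    truncDist E p S i ∈ Set.Icc 0 1 := by
  by_cases hi : i ∈ S
  · simp [truncDist_of_mem hi]
  · rw [truncDist_of_notMem hi]
    constructor <;> linarith [piStar_nonneg (S := S) hp i, piStar_le_one (S := S) hp i]

lemma truncDist_le_add (hp : ∀ e ∈ E, 0 ≤ p e ∧ p e ≤ 1) {a b : V} (hab : (a, b) ∈ E) :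
    truncDist E p S b ≤ truncDist E p S a + (1 - p (a, b)) := by
  by_cases hb : b ∈ S
  · linarith [truncDist_of_mem (E := E) (p := p) hb, (truncDist_mem_Icc (S := S) hp a).1,
      hp _ hab]
  rw [truncDist_of_notMem hb]
  by_cases ha : a ∈ S
  · linarith [truncDist_of_mem (E := E) (p := p) ha, le_piStar_of_mem hp ha hab]
  · linarith [truncDist_of_notMem (E := E) (p := p) ha, piStar_le_piStar_add (S := S) hp hab]

end TruncDist

section LowerBound

variable {E : Finset (V × V)} {p : V × V → ℝ} {S : Finset V} {θ : Finset (V × V) → ℝ}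

lemma piStar_le_prob (hθ : memTheta E p θ) (i : V) :
    piStar E p S i ≤ prob θ (fun c => influenced c S i) := by
  refine piStar_le (prob_nonneg hθ.1 _) fun γ hγ => ?_
  calc L p γ = 1 - ((pathEdges γ).map fun e => 1 - prob θ (fun c => e ∈ c)).sum := by
        rw [L]
        congr 2
        refine List.map_congr_left fun e he => ?_
        rw [hθ.prob_mem_eq (hγ.mem_of_mem_pathEdges he)]
    _ ≤ prob θ (fun c => ∀ e ∈ pathEdges γ, e ∈ c) :=
        one_sub_sum_le_prob_forall hθ.1 hθ.2.2.1 (fun e c => e ∈ c) _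
    _ ≤ prob θ (fun c => influenced c S i) :=
        prob_mono hθ.1 fun _ => influenced_of_isPathFrom hγ

lemma one_sub_truncDist_le_prob (hθ : memTheta E p θ) (i : V) :
    1 - truncDist E p S i ≤ prob θ (fun c => influenced c S i) := by
  by_cases hi : i ∈ S
  · rw [truncDist_of_mem hi, prob_eq_one hθ.2.2.1 fun c => ⟨i, hi, .refl⟩]
    norm_num
  · rw [truncDist_of_notMem hi, sub_sub_cancel]
    exact piStar_le_prob hθ i

end LowerBound

section Coupling

/-- The arc `(a, a + w]` of `ℝ/ℤ`, lifted to `(0, 1]` when `a, w ∈ [0, 1]`. -/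
def wrapIoc (a w : ℝ) : Set ℝ := Set.Ioc a (a + w) ∪ Set.Iic (a + w - 1)

lemma measurableSet_wrapIoc (a w : ℝ) : MeasurableSet (wrapIoc a w) :=
  measurableSet_Ioc.union measurableSet_Iic

lemma restrict_Ioc_real_Ioi {x : ℝ} (hx : x ∈ Set.Icc 0 1) :
    (volume.restrict (Set.Ioc (0 : ℝ) 1)).real (Set.Ioi x) = 1 - x := by
  rw [measureReal_restrict_apply measurableSet_Ioi, Set.inter_comm, Set.Ioc_inter_Ioi,
    sup_eq_right.2 hx.1, Real.volume_real_Ioc_of_le hx.2]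

lemma restrict_Ioc_real_wrapIoc {a w : ℝ} (ha : a ∈ Set.Icc 0 1) (hw : w ∈ Set.Icc 0 1) :
    (volume.restrict (Set.Ioc (0 : ℝ) 1)).real (wrapIoc a w) = w := by
  obtain ⟨ha0, ha1⟩ := ha
  obtain ⟨hw0, hw1⟩ := hw
  rw [measureReal_restrict_apply (measurableSet_wrapIoc a w)]
  rcases le_or_gt (a + w) 1 with h | h
  · have : wrapIoc a w ∩ Set.Ioc 0 1 = Set.Ioc a (a + w) := by
      ext u
      simp only [wrapIoc, Set.mem_inter_iff, Set.mem_union, Set.mem_Ioc, Set.mem_Iic]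
      grind
    rw [this, Real.volume_real_Ioc_of_le (by linarith)]
    ring
  · have : wrapIoc a w ∩ Set.Ioc 0 1 = Set.Ioc 0 (a + w - 1) ∪ Set.Ioc a 1 := by
      ext u
      simp only [wrapIoc, Set.mem_inter_iff, Set.mem_union, Set.mem_Ioc, Set.mem_Iic]
      grind
    rw [this, measureReal_union (Set.Ioc_disjoint_Ioc_of_le (by linarith)) measurableSet_Ioc
      (by simp) (by simp), Real.volume_real_Ioc_of_le (by linarith),
      Real.volume_real_Ioc_of_le ha1]
    ring

omit [Fintype V] [DecidableEq V]

variable {E : Finset (V × V)} {p : V × V → ℝ} {S : Finset V} {d : V → ℝ}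

open Classical in
noncomputable def arcScenario (E : Finset (V × V)) (p : V × V → ℝ) (d : V → ℝ) (u : ℝ) :
    Finset (V × V) :=
  E.filter fun e => u ∉ wrapIoc (d e.1) (1 - p e)

lemma mem_arcScenario {u : ℝ} {e : V × V} :
    e ∈ arcScenario E p d u ↔ e ∈ E ∧ u ∉ wrapIoc (d e.1) (1 - p e) := by
  simp [arcScenario]

lemma arcScenario_subset (u : ℝ) : arcScenario E p d u ⊆ E :=
  fun _ he => (mem_arcScenario.1 he).1

lemma setOf_mem_arcScenario {e : V × V} (he : e ∈ E) :
    {u | e ∈ arcScenario E p d u} = (wrapIoc (d e.1) (1 - p e))ᶜ := by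
  ext u
  simp [mem_arcScenario, he]

lemma measurableSet_setOf_mem_arcScenario (e : V × V) :
    MeasurableSet {u | e ∈ arcScenario E p d u} := by
  by_cases he : e ∈ E
  · rw [setOf_mem_arcScenario he]
    exact (measurableSet_wrapIoc _ _).compl
  · simp [mem_arcScenario, he]

lemma lt_of_influenced_arcScenario (hS : ∀ s ∈ S, d s = 0)
    (hd : ∀ e ∈ E, d e.2 ≤ d e.1 + (1 - p e)) {u : ℝ} (hu : 0 < u) {i : V}
    (h : influenced (arcScenario E p d u) S i) : d i < u := by
  obtain ⟨s, hs, hsi⟩ := h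
  induction hsi with
  | refl => rwa [hS s hs]
  | @tail a b _ hab ih =>
    obtain ⟨hab, hlive⟩ := mem_arcScenario.1 hab
    have : ¬ u ≤ d a + (1 - p (a, b)) := fun h => hlive (Or.inl ⟨ih, h⟩)
    linarith [hd _ hab]

end Coupling

theorem exists_memTheta_prob_influenced_le {E : Finset (V × V)} {p : V × V → ℝ} {S : Finset V}
    {d : V → ℝ} (hp : ∀ e ∈ E, 0 ≤ p e ∧ p e ≤ 1) (hd01 : ∀ i, d i ∈ Set.Icc 0 1)
    (hS : ∀ s ∈ S, d s = 0) (hd : ∀ e ∈ E, d e.2 ≤ d e.1 + (1 - p e)) :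
    ∃ θ, memTheta E p θ ∧ ∀ i, prob θ (fun c => influenced c S i) ≤ 1 - d i := by
  set μ := volume.restrict (Set.Ioc (0 : ℝ) 1)
  have : IsProbabilityMeasure μ := ⟨by simp [μ]⟩
  have hX := measurableSet_preimage_singleton_of_forall_mem
    (measurableSet_setOf_mem_arcScenario (E := E) (p := p) (d := d))
  refine ⟨law μ (arcScenario E p d), memTheta_law hX arcScenario_subset fun e he => ?_,
    fun i => ?_⟩
  · have hw : 1 - p e ∈ Set.Icc 0 1 := ⟨by linarith [hp e he], by linarith [hp e he]⟩
    rw [setOf_mem_arcScenario he, measureReal_compl (measurableSet_wrapIoc _ _), probReal_univ,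
      restrict_Ioc_real_wrapIoc (hd01 _) hw]
    ring
  · rw [prob_law hX, ← restrict_Ioc_real_Ioi (hd01 i)]
    refine ENNReal.toReal_mono (measure_ne_top _ _) (measure_mono_ae ?_)
    filter_upwards [ae_restrict_mem measurableSet_Ioc] with u hu hinf
    exact lt_of_influenced_arcScenario hS hd hu.1 hinf

theorem minimizer_influence_prob_eq_piStar_general (E : Finset (V × V)) (p : V × V → ℝ)
    (S : Finset V)
    (θs : Finset (V × V) → ℝ) (hθs : memTheta E p θs)
    (hmin : ∀ θ : Finset (V × V) → ℝ, memTheta E p θ → expInf θs S ≤ expInf θ S) :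
    ∀ i ∈ Finset.univ \ S, prob θs (fun c => influenced c S i) = piStar E p S i := by
  intro i hi
  have hp := hθs.nonneg_and_le_one
  obtain ⟨θ, hθ, hθ_le⟩ := exists_memTheta_prob_influenced_le hp (truncDist_mem_Icc hp)
    (fun _ => truncDist_of_mem) (fun _ => truncDist_le_add hp)
  have hlow : ∀ j ∈ univ, 1 - truncDist E p S j ≤ prob θs (fun c => influenced c S j) :=
    fun j _ => one_sub_truncDist_le_prob hθs j
  have hup : ∑ j, prob θs (fun c => influenced c S j) ≤ ∑ j, (1 - truncDist E p S j) :=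
    calc ∑ j, prob θs (fun c => influenced c S j)
        = expInf θs S := (expInf_eq_sum_prob θs S).symm
      _ ≤ expInf θ S := hmin θ hθ
      _ = ∑ j, prob θ (fun c => influenced c S j) := expInf_eq_sum_prob θ S
      _ ≤ ∑ j, (1 - truncDist E p S j) := sum_le_sum fun j _ => hθ_le j
  have hi_eq := (sum_eq_sum_iff_of_le hlow).1 (le_antisymm (sum_le_sum hlow) hup) i (mem_univ i)
  rw [truncDist_of_notMem (mem_sdiff.1 hi).2, sub_sub_cancel] at hi_eq
  exact hi_eq.symm

/-- if `θ*` attains the minimum of `E_θ[R(c̃, S)]` over `Θ`, then for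
every `i ∈ V \ S`, the probability under `θ*` that `i` is influenced equals `π*_i`. -/
theorem minimizer_influence_prob_eq_piStar (E : Finset (V × V)) (p : V × V → ℝ)
    (hp : ∀ e ∈ E, 0 ≤ p e ∧ p e ≤ 1) (S : Finset V)
    (θs : Finset (V × V) → ℝ) (hθs : memTheta E p θs)
    (hmin : ∀ θ : Finset (V × V) → ℝ, memTheta E p θ → expInf θs S ≤ expInf θ S) :
    ∀ i ∈ Finset.univ \ S, prob θs (fun c => influenced c S i) = piStar E p S i :=
  minimizer_influence_prob_eq_piStar_general E p S θs hθs hmin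

end CorrIM
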